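/- arXiv:2005.06290 — 2 statements merged into one kernel-verified Lean document; each statement's English description precedes it below -/
import Mathlib

section
/- Define f_n : T_n → ℤ(x) by f_1 ≡ 1 and f_n(β) = det(ψ_n(β) − I_{n−1}) / ((−x)^{n−1} U_{n−1}(1/x)) for n ≥ 2. Then f_n(1) = 0 and f_n(t_1 t_2 ⋯ t_{n−1}) = 1 for all n ≥ 2. -/
open Matrix Polynomial

/-- Deformed Tits matrix `V_i` (generator index `i` is 1-based, `1 ≤ i ≤ m`):
the identity `m × m` matrix except column `i`, which has `-1` on the diagonal,
`y` in row `i-1` and `x` in row `i+1`. -/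
def Vmat {R : Type*} [CommRing R] (x y : R) (m i : ℕ) : Matrix (Fin m) (Fin m) R :=
  Matrix.of fun r c =>
    if (c : ℕ) + 1 = i then
      if (r : ℕ) + 1 = i then -1
      else if (r : ℕ) + 2 = i then y
      else if (r : ℕ) = i then x
      else 0
    else if r = c then 1 else 0

/-- Relators of the twin group with `m` generators (the twin group on `m+1` strands). -/
def twinRels (m : ℕ) : Set (FreeGroup (Fin m)) :=
  {r | (∃ i, r = FreeGroup.of i * FreeGroup.of i) ∨
       (∃ i j : Fin m, (i : ℕ) + 1 < (j : ℕ) ∧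
          r = FreeGroup.of i * FreeGroup.of j * (FreeGroup.of i)⁻¹ * (FreeGroup.of j)⁻¹)}

/-- The twin group `T_{m+1}` on `m+1` strands, with `m` generators `t_1, …, t_m`;
the generator `t_{i+1}` is `TwinGroup.of i` for `i : Fin m`. -/
def TwinGroup (m : ℕ) : Type := PresentedGroup (twinRels m)

instance (m : ℕ) : Group (TwinGroup m) :=
  inferInstanceAs (Group (PresentedGroup (twinRels m)))

/-- The generator `t_{i+1}` of the twin group. -/
def TwinGroup.of {m : ℕ} (i : Fin m) : TwinGroup m := PresentedGroup.of i

/-- The field `ℤ(x)` of rational functions over `ℤ`. -/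
noncomputable abbrev Zx : Type := FractionRing (Polynomial ℤ)

/-- The element `x` of `ℤ(x)`. -/
noncomputable def xx : Zx := algebraMap (Polynomial ℤ) Zx Polynomial.X

/-- `U_n(1/x)` as an element of `ℤ(x)`, `U_n` the `n`-th Chebyshev polynomial
of the second kind. -/
noncomputable def Ux (n : ℕ) : Zx := Polynomial.eval xx⁻¹ (Polynomial.Chebyshev.U Zx n)

/-!
Each `V_i` is the rank-one perturbation `1 + A E_ii` of the identity, where `A` is the
tridiagonal matrix with `-2` on the diagonal, `y` above and `x` below it. Splitting `A = L + U`
into its lower (diagonal included) and strictly upper parts, one has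
`(V_1 ⋯ V_m)(1 - U) = 1 + L`, hence `(V_1 ⋯ V_m - 1)(1 - U) = A`, and since `1 - U` is
unitriangular, `det (V_1 ⋯ V_m - 1) = det A`. Expanding along the first row, `det A` satisfies
the Chebyshev recurrence `D_{m+2} = -2 D_{m+1} - x y D_m`, so for `y = x` it equals
`(-x)^m U_m(1/x)`; this is nonzero, being a polynomial in `x` with constant term `(-2)^m`.
-/

-- Inductive step for the partial products `P = V_1 ⋯ V_k`: `π` projects onto the first `k`
-- coordinates and `E = E_{k+1,k+1}`.
theorem mul_one_add_mul_mul_one_sub {α : Type*} [Ring α] {P L U E π : α}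
    (hEUπ : E * U * π = 0) (hEUE : E * U * E = 0) (hπLE : π * L * E = 0)
    (hP : P * (1 - U * π) = 1 + L * π) :
    P * (1 + (L + U) * E) * (1 - U * (π + E)) = 1 + L * (π + E) := by
  have hfactor : (1 + (L + U) * E) * (1 - U * (π + E)) = 1 - U * π + L * E := by
    have : (1 + (L + U) * E) * (1 - U * (π + E)) =
        1 - U * π + L * E - (L + U) * (E * U * π) - (L + U) * (E * U * E) := by noncomm_ring
    rw [this, hEUπ, hEUE]; noncomm_ring
  have hPLE : P * (L * E) = L * E := calc
    P * (L * E) = P * (1 - U * π) * (L * E) + P * U * (π * L * E) := by noncomm_ring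
    _ = (1 + L * π) * (L * E) := by rw [hP, hπLE, mul_zero, add_zero]
    _ = L * E + L * (π * L * E) := by noncomm_ring
    _ = L * E := by rw [hπLE, mul_zero, add_zero]
  calc P * (1 + (L + U) * E) * (1 - U * (π + E))
      = P * (1 - U * π) + P * (L * E) := by rw [mul_assoc, hfactor]; noncomm_ring
    _ = 1 + L * (π + E) := by rw [hP, hPLE]; noncomm_ring

namespace Matrix

section Ring

variable {R : Type*} [Ring R] {n : ℕ}

def projLT (n k : ℕ) : Matrix (Fin n) (Fin n) R :=
  diagonal fun i => if (i : ℕ) < k then 1 else 0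

theorem projLT_zero : projLT n 0 = (0 : Matrix (Fin n) (Fin n) R) := by
  simp [projLT]

theorem projLT_self : projLT n n = (1 : Matrix (Fin n) (Fin n) R) := by
  simp [projLT]

theorem projLT_succ (j : Fin n) :
    projLT n (j + 1) = projLT n j + single j j (1 : R) := by
  ext a b
  simp only [projLT, add_apply, diagonal_apply, single_apply]
  split_ifs <;> simp_all [Fin.ext_iff] <;> omega

theorem single_mul_mul_projLT {U : Matrix (Fin n) (Fin n) R} (hU : ∀ i j, j ≤ i → U i j = 0)
    (j : Fin n) : single j j 1 * U * projLT n j = 0 := by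
  ext a b
  rw [projLT, mul_diagonal]
  by_cases ha : a = j
  · subst ha
    simp only [single_mul_apply_same, one_mul, zero_apply]
    split_ifs with hb
    · rw [hU _ _ (le_of_lt hb), zero_mul]
    · rw [mul_zero]
  · simp [single_mul_apply_of_ne _ _ _ _ _ ha]

theorem projLT_mul_mul_single {L : Matrix (Fin n) (Fin n) R} (hL : ∀ i j, i < j → L i j = 0)
    (j : Fin n) : projLT n j * L * single j j 1 = 0 := by
  ext a b
  rw [projLT, Matrix.mul_assoc]
  by_cases hb : b = j
  · subst hb
    simp only [diagonal_mul, mul_single_apply_same, mul_one, zero_apply]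
    split_ifs with ha
    · rw [hL _ _ ha, mul_zero]
    · rw [zero_mul]
  · simp [diagonal_mul, mul_single_apply_of_ne _ _ _ _ _ hb]

theorem prod_ofFn_one_add_mul_single_mul_one_sub {L U : Matrix (Fin n) (Fin n) R}
    (hL : ∀ i j, i < j → L i j = 0) (hU : ∀ i j, j ≤ i → U i j = 0) :
    (List.ofFn fun j : Fin n => 1 + (L + U) * single j j 1).prod * (1 - U) = 1 + L := by
  set V := List.ofFn fun j : Fin n => 1 + (L + U) * single j j (1 : R)
  suffices h : ∀ k ≤ n, (V.take k).prod * (1 - U * projLT n k) = 1 + L * projLT n k by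
    simpa [projLT_self, V, List.take_of_length_le] using h n le_rfl
  intro k hk
  induction k with
  | zero => simp [projLT_zero]
  | succ k ih =>
    let j : Fin n := ⟨k, hk⟩
    have hEUE : single j j 1 * U * single j j 1 = 0 := by
      rw [single_mul_mul_single, hU j j le_rfl, mul_zero, zero_mul, single_zero]
    rw [List.prod_take_succ _ _ (by simpa [V] using hk), List.getElem_ofFn,
      projLT_succ j]
    exact mul_one_add_mul_mul_one_sub (single_mul_mul_projLT hU j) hEUE
      (projLT_mul_mul_single hL j) (ih (by omega))

end Ring

theorem det_prod_ofFn_one_add_mul_single_sub_one {R : Type*} [CommRing R] {n : ℕ}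
    (A : Matrix (Fin n) (Fin n) R) :
    det ((List.ofFn fun j : Fin n => 1 + A * single j j 1).prod - 1) = det A := by
  let L : Matrix (Fin n) (Fin n) R := of fun i j => if j ≤ i then A i j else 0
  let U : Matrix (Fin n) (Fin n) R := of fun i j => if i < j then A i j else 0
  have hA : L + U = A := by
    ext i j
    by_cases h : j ≤ i <;> simp [L, U, h, not_lt.2, lt_of_not_ge]
  have hprod := prod_ofFn_one_add_mul_single_mul_one_sub (L := L) (U := U)
    (fun i j h => if_neg (not_le.2 h)) (fun i j h => if_neg (not_lt.2 h))
  rw [hA] at hprod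
  have hunit : det (1 - U) = 1 := by
    rw [det_of_isUpperTriangular]
    · simp [U]
    · intro i j (hji : j < i)
      simp [U, hji.ne', not_lt.2 hji.le]
  calc det ((List.ofFn fun j : Fin n => 1 + A * single j j 1).prod - 1)
      = det (((List.ofFn fun j : Fin n => 1 + A * single j j 1).prod - 1) * (1 - U)) := by
        rw [det_mul, hunit, mul_one]
    _ = det A := by rw [sub_mul, hprod, one_mul, ← hA]; congr 1; abel

section Tridiagonal
variable {R : Type*} [CommRing R]

def tridiagonal (a b c : R) (n : ℕ) : Matrix (Fin n) (Fin n) R :=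
  of fun i j => if i = j then a else if (i : ℕ) + 1 = j then b else if (j : ℕ) + 1 = i then c else 0

theorem tridiagonal_submatrix_succ (a b c : R) (n : ℕ) :
    (tridiagonal a b c (n + 1)).submatrix Fin.succ Fin.succ = tridiagonal a b c n := by
  ext i j
  simp [tridiagonal, Fin.succ_inj]

theorem det_tridiagonal_succ_succ (a b c : R) (n : ℕ) :
    det (tridiagonal a b c (n + 2)) =
      a * det (tridiagonal a b c (n + 1)) - b * c * det (tridiagonal a b c n) := by
  have hminor : det ((tridiagonal a b c (n + 2)).submatrix Fin.succ (Fin.succAbove 1)) =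
      c * det (tridiagonal a b c n) := by
    rw [det_succ_column_zero, Fin.sum_univ_succ, Finset.sum_eq_zero fun i _ => ?_]
    · have : ((tridiagonal a b c (n + 2)).submatrix Fin.succ (Fin.succAbove 1)).submatrix
          (Fin.succAbove 0) Fin.succ = tridiagonal a b c n := by
        ext i j
        simp [tridiagonal, Fin.succ_inj, Fin.one_succAbove_succ]
      rw [this]
      simp [tridiagonal]
    · simp [tridiagonal]
  rw [det_succ_row_zero, Fin.sum_univ_succ, Fin.sum_univ_succ, Finset.sum_eq_zero fun i _ => ?_]
  · have h00 : tridiagonal a b c (n + 2) 0 0 = a := by simp [tridiagonal]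
    have h01 : tridiagonal a b c (n + 2) 0 (Fin.succ 0) = b := by simp [tridiagonal]
    rw [h00, h01, Fin.succAbove_zero, tridiagonal_submatrix_succ, Fin.succ_zero_eq_one, hminor]
    simp only [Fin.val_zero, Fin.val_one, pow_zero, pow_one]
    ring
  · have : tridiagonal a b c (n + 2) 0 i.succ.succ = 0 := by
      simp [tridiagonal, (Fin.succ_ne_zero _).symm]
    rw [this, mul_zero, zero_mul]

theorem det_tridiagonal_zero_zero (a : R) (n : ℕ) : det (tridiagonal a 0 0 n) = a ^ n := by
  have : tridiagonal a 0 0 n = diagonal fun _ => a := by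
    ext i j
    simp [tridiagonal, diagonal_apply]
  simp [this]

theorem map_tridiagonal {S : Type*} [CommRing S] (f : R →+* S) (a b c : R) (n : ℕ) :
    (tridiagonal a b c n).map f = tridiagonal (f a) (f b) (f c) n := by
  ext i j
  simp only [tridiagonal, map_apply, of_apply]
  split_ifs <;> simp

theorem det_tridiagonal_two_mul (t b c : R) (hbc : b * c = 1) (n : ℕ) :
    det (tridiagonal (2 * t) b c n) = (Chebyshev.U R n).eval t := by
  induction n using Nat.twoStepInduction with
  | zero => simp
  | one => simp [tridiagonal]
  | more n ih₀ ih₁ =>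
    rw [det_tridiagonal_succ_succ, ih₀, ih₁, hbc]
    push_cast
    rw [Chebyshev.U_add_two]
    simp only [eval_sub, eval_mul, eval_X, eval_ofNat]
    ring

end Tridiagonal

end Matrix

theorem Vmat_eq_one_add_mul_single {R : Type*} [CommRing R] (x y : R) {n : ℕ} (j : Fin n) :
    Vmat x y n (j + 1) = 1 + tridiagonal (-2) y x n * single j j 1 := by
  ext r c
  by_cases hc : c = j
  · subst hc
    simp only [Vmat, tridiagonal, of_apply, Matrix.add_apply, one_apply, mul_single_apply_same,
      mul_one, Fin.ext_iff]
    split_ifs <;> first | (exfalso; omega) | ring1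
  · simp [Vmat, mul_single_apply_of_ne _ _ _ _ _ hc, one_apply, Fin.val_ne_of_ne hc]

theorem det_tridiagonal_neg_two {K : Type*} [Field K] {x : K} (hx : x ≠ 0) (n : ℕ) :
    det (tridiagonal (-2) x x n) = (-x) ^ n * (Chebyshev.U K n).eval x⁻¹ := by
  have hscale : tridiagonal (-2) x x n = (-x) • tridiagonal (2 * x⁻¹) (-1) (-1) n := by
    ext i j
    simp only [tridiagonal, Matrix.smul_apply, of_apply, smul_eq_mul]
    split_ifs <;> simp [field]
  rw [hscale, det_smul, Fintype.card_fin, det_tridiagonal_two_mul _ _ _ (by ring)]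

theorem xx_ne_zero : xx ≠ 0 :=
  (map_ne_zero_iff _ (IsFractionRing.injective ℤ[X] Zx)).2 X_ne_zero

theorem det_tridiagonal_neg_two_xx_ne_zero (n : ℕ) : det (tridiagonal (-2) xx xx n) ≠ 0 := by
  have hlift : det (tridiagonal (-2) xx xx n) = algebraMap ℤ[X] Zx (det (tridiagonal (-2) X X n)) := by
    rw [RingHom.map_det, RingHom.mapMatrix_apply, map_tridiagonal, map_neg, map_ofNat, xx]
  have heval : (det (tridiagonal (-2) X X n)).eval 0 = (-2) ^ n := by
    rw [← coe_evalRingHom, RingHom.map_det, RingHom.mapMatrix_apply, map_tridiagonal]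
    simp [det_tridiagonal_zero_zero]
  rw [hlift, map_ne_zero_iff _ (IsFractionRing.injective ℤ[X] Zx)]
  intro h
  rw [h, eval_zero] at heval
  exact pow_ne_zero n (by norm_num) heval.symm

/-- With `f_n(β) = det(ψ_n(β) − I_{n−1}) / ((−x)^{n−1} U_{n−1}(1/x))` (`n = m+1 ≥ 2`),
one has `f_n(1) = 0` and `f_n(t_1 t_2 ⋯ t_{n−1}) = 1`. -/
theorem stmt12 (m : ℕ) (hm : 1 ≤ m)
    (ψ : TwinGroup m →* Matrix (Fin m) (Fin m) Zx)
    (hψ : ∀ i : Fin m, ψ (TwinGroup.of i) = Vmat xx xx m ((i : ℕ) + 1)) :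
    Matrix.det (ψ 1 - 1) / ((-xx)^m * Ux m) = 0 ∧
    Matrix.det (ψ ((List.ofFn fun i : Fin m => TwinGroup.of i).prod) - 1)
        / ((-xx)^m * Ux m) = 1 := by
  have hprod : ψ (List.ofFn fun i : Fin m => TwinGroup.of i).prod =
      (List.ofFn fun j : Fin m => 1 + tridiagonal (-2) xx xx m * single j j 1).prod := by
    simp only [map_list_prod, List.map_ofFn, Function.comp_def, hψ, Vmat_eq_one_add_mul_single]
  have : Nonempty (Fin m) := ⟨⟨0, hm⟩⟩
  refine ⟨by simp, ?_⟩
  rw [hprod, det_prod_ofFn_one_add_mul_single_sub_one, Ux, ← det_tridiagonal_neg_two xx_ne_zero]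
  exact div_self (det_tridiagonal_neg_two_xx_ne_zero m)
end

section
/- Let α ∈ T_n and β ∈ T_m, and consider the twin ι^R(α)·ι^L(β) ∈ T_{n+m} formed by placing β to the right of α (shifting generators of β by n and including α unchanged). Then f_{n+m}(ι^R(α)·ι^L(β)) = 0. -/
open Matrix Polynomial

/-! Every generator of `ι^R(T_n)` and of `ι^L(T_m)` is a `t_k` with `k ≠ n`, and the deformed
Tits matrix of such a `t_k` differs from the identity only in column `k ≠ n`. Hence `ψ` of the
split twin fixes the `n`-th basis vector, so `ψ(ι^R(α)ι^L(β)) - 1` is singular and the numerator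
of `f_{n+m}` vanishes. -/

theorem Vmat_mulVec_single_one_of_ne {R : Type*} [CommRing R] (x y : R) {m i : ℕ} {j : Fin m}
    (hj : (j : ℕ) + 1 ≠ i) : Vmat x y m i *ᵥ Pi.single j 1 = Pi.single j 1 := by
  rw [mulVec_single_one]
  ext r
  simp [Vmat, hj, Pi.single_apply]

theorem TwinGroup.closure_range_of (m : ℕ) :
    Subgroup.closure (Set.range (TwinGroup.of : Fin m → TwinGroup m)) = ⊤ :=
  PresentedGroup.closure_range_of (twinRels m)

theorem MonoidHom.mulVec_eq_self_of_closure_eq_top {G n R : Type*} [Group G] [Fintype n]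
    [DecidableEq n] [Semiring R] (ρ : G →* Matrix n n R) {S : Set G}
    (hS : Subgroup.closure S = ⊤) {v : n → R} (hv : ∀ s ∈ S, ρ s *ᵥ v = v) (g : G) :
    ρ g *ᵥ v = v := by
  have hg : g ∈ Subgroup.closure S := hS ▸ Subgroup.mem_top g
  induction hg using Subgroup.closure_induction with
  | mem s hs => exact hv s hs
  | one => simp
  | mul g h _ _ hg hh => rw [map_mul, ← mulVec_mulVec, hh, hg]
  | inv g _ hg =>
    conv_lhs => rw [← hg]
    rw [mulVec_mulVec, ← map_mul, inv_mul_cancel, map_one, one_mulVec]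

theorem Matrix.det_sub_one_eq_zero_of_mulVec_eq_self {n A : Type*} [Fintype n] [DecidableEq n]
    [CommRing A] [IsDomain A] {M : Matrix n n A} {v : n → A} (hv : v ≠ 0) (hM : M *ᵥ v = v) :
    (M - 1).det = 0 :=
  exists_mulVec_eq_zero_iff.mp ⟨v, hv, by rw [sub_mulVec, hM, one_mulVec, sub_self]⟩

/-- Proposition 4.14 (key step): for `α ∈ T_n` and `β ∈ T_m`
(`n = a+1`, `m = b+1`, so `T_{n+m} = TwinGroup (a+b+1)`), the split twin
`ι^R(α)·ι^L(β)` (with `ι^R(t_i) = t_i` and `ι^L(t_i) = t_{i+n}`) satisfies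
`f_{n+m}(ι^R(α)·ι^L(β)) = 0`. -/
theorem stmt18 (a b : ℕ) (α : TwinGroup a) (β : TwinGroup b)
    (ψ : TwinGroup (a+b+1) →* Matrix (Fin (a+b+1)) (Fin (a+b+1)) Zx)
    (hψ : ∀ k : Fin (a+b+1), ψ (TwinGroup.of k) = Vmat xx xx (a+b+1) ((k : ℕ) + 1))
    (ιR : TwinGroup a →* TwinGroup (a+b+1))
    (hιR : ∀ k : Fin a, ιR (TwinGroup.of k)
        = TwinGroup.of (⟨(k : ℕ), by have := k.isLt; omega⟩ : Fin (a+b+1)))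
    (ιL : TwinGroup b →* TwinGroup (a+b+1))
    (hιL : ∀ k : Fin b, ιL (TwinGroup.of k)
        = TwinGroup.of (⟨(k : ℕ) + a + 1, by have := k.isLt; omega⟩ : Fin (a+b+1))) :
    Matrix.det (ψ (ιR α * ιL β) - 1) / ((-xx)^(a+b+1) * Ux (a+b+1)) = 0 := by
  set e : Fin (a+b+1) → Zx := Pi.single ⟨a, by omega⟩ 1
  have hfix (k : Fin (a+b+1)) (hk : (k : ℕ) ≠ a) : ψ (TwinGroup.of k) *ᵥ e = e := by
    rw [hψ]
    exact Vmat_mulVec_single_one_of_ne xx xx (by simpa using hk.symm)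
  have hR : ψ (ιR α) *ᵥ e = e := by
    refine (ψ.comp ιR).mulVec_eq_self_of_closure_eq_top (TwinGroup.closure_range_of a) ?_ α
    rintro _ ⟨k, rfl⟩
    simpa [hιR] using hfix _ (by simp; omega)
  have hL : ψ (ιL β) *ᵥ e = e := by
    refine (ψ.comp ιL).mulVec_eq_self_of_closure_eq_top (TwinGroup.closure_range_of b) ?_ β
    rintro _ ⟨k, rfl⟩
    simpa [hιL] using hfix _ (by simp; omega)
  have hprod : ψ (ιR α * ιL β) *ᵥ e = e := by rw [map_mul, ← mulVec_mulVec, hL, hR]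
  rw [det_sub_one_eq_zero_of_mulVec_eq_self (Pi.single_ne_zero_iff.mpr one_ne_zero) hprod,
    zero_div]
end
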